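/- Deconcatenation is a morphism for the shuffle product: for all words u, v, the deconcatenation coproduct Δ (sending a word ℓ₁…ℓₙ to Σ_{m=0}^{n} ℓ₁…ℓ_m ⊗ ℓ_{m+1}…ℓₙ) satisfies Δ(u ⧢ v) = Δ(u) ⧢ Δ(v), where the shuffle on the tensor square is computed componentwise. -/

import Mathlib

noncomputable def shuffle {A : Type*} : List A → List A → (List A →₀ ℝ)
  | [], v => Finsupp.single v 1
  | u@(_ :: _), [] => Finsupp.single u 1
  | a :: u, b :: v =>
      Finsupp.mapDomain (a :: ·) (shuffle u (b :: v)) +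
      Finsupp.mapDomain (b :: ·) (shuffle (a :: u) v)
  termination_by u v => u.length + v.length
  decreasing_by all_goals (simp; try omega)

lemma shuffle_nil_left {A : Type*} (v : List A) : shuffle [] v = Finsupp.single v 1 := by
  simp [shuffle]

lemma shuffle_nil_right {A : Type*} (v : List A) : shuffle v [] = Finsupp.single v 1 := by
  cases v <;> simp [shuffle]

lemma shuffle_cons_cons {A : Type*} (a b : A) (u v : List A) :
    shuffle (a :: u) (b :: v) =
      Finsupp.mapDomain (a :: ·) (shuffle u (b :: v)) +
      Finsupp.mapDomain (b :: ·) (shuffle (a :: u) v) := by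
  rw [shuffle]

noncomputable def tensorF {A : Type*} (x y : List A →₀ ℝ) : (List A × List A) →₀ ℝ :=
  x.sum fun w₁ e => y.sum fun w₂ f => Finsupp.single (w₁, w₂) (e * f)

lemma tensorF_zero_left {A : Type*} (y : List A →₀ ℝ) : tensorF 0 y = 0 := by
  simp [tensorF]

lemma tensorF_add_left {A : Type*} (x x' y : List A →₀ ℝ) :
    tensorF (x + x') y = tensorF x y + tensorF x' y := by
  unfold tensorF
  rw [Finsupp.sum_add_index'] <;> intros <;>
    simp [add_mul, Finsupp.single_add, Finsupp.sum_add]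

lemma tensorF_add_right {A : Type*} (x y y' : List A →₀ ℝ) :
    tensorF x (y + y') = tensorF x y + tensorF x y' := by
  unfold tensorF
  rw [← Finsupp.sum_add]
  refine Finsupp.sum_congr fun w₁ _ => ?_
  rw [Finsupp.sum_add_index'] <;> intros <;>
    simp [mul_add, Finsupp.single_add]

lemma tensorF_single_single {A : Type*} (w₁ w₂ : List A) (e f : ℝ) :
    tensorF (Finsupp.single w₁ e) (Finsupp.single w₂ f) = Finsupp.single (w₁, w₂) (e * f) := by
  unfold tensorF
  rw [Finsupp.sum_single_index, Finsupp.sum_single_index] <;> simp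

lemma tensorF_smul_left {A : Type*} (c : ℝ) (x y : List A →₀ ℝ) :
    tensorF (c • x) y = c • tensorF x y := by
  unfold tensorF
  rw [Finsupp.sum_smul_index, Finsupp.smul_sum]
  · refine Finsupp.sum_congr fun w₁ _ => ?_
    rw [Finsupp.smul_sum]
    refine Finsupp.sum_congr fun w₂ _ => ?_
    rw [Finsupp.smul_single, smul_eq_mul, mul_assoc]
  · intro w; simp

lemma tensorF_smul_right {A : Type*} (c : ℝ) (x y : List A →₀ ℝ) :
    tensorF x (c • y) = c • tensorF x y := by
  unfold tensorF
  rw [Finsupp.smul_sum]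
  refine Finsupp.sum_congr fun w₁ _ => ?_
  rw [Finsupp.sum_smul_index, Finsupp.smul_sum]
  · refine Finsupp.sum_congr fun w₂ _ => ?_
    rw [Finsupp.smul_single, smul_eq_mul, mul_left_comm]
  · intro w; simp

lemma tensorF_mapDomain_left {A : Type*} (g : List A → List A) (x y : List A →₀ ℝ) :
    tensorF (Finsupp.mapDomain g x) y =
      Finsupp.mapDomain (Prod.map g id) (tensorF x y) := by
  induction x using Finsupp.induction_linear with
  | zero => simp [tensorF_zero_left]
  | add p q hp hq =>
      rw [Finsupp.mapDomain_add, tensorF_add_left, tensorF_add_left, hp, hq,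
        Finsupp.mapDomain_add]
  | single w c =>
      rw [Finsupp.mapDomain_single]
      unfold tensorF
      rw [Finsupp.sum_single_index (by simp), Finsupp.sum_single_index (by simp),
        show Finsupp.mapDomain (α := List A × List A) (Prod.map g id) =
          ⇑(Finsupp.mapDomain.addMonoidHom (M := ℝ) (Prod.map g id)) from rfl,
        map_finsuppSum]
      refine Finsupp.sum_congr fun w₂ _ => ?_
      rw [Finsupp.mapDomain.addMonoidHom_apply, Finsupp.mapDomain_single]
      rfl

lemma tensorF_mapDomain_right {A : Type*} (g : List A → List A) (x y : List A →₀ ℝ) :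
    tensorF x (Finsupp.mapDomain g y) =
      Finsupp.mapDomain (Prod.map id g) (tensorF x y) := by
  induction y using Finsupp.induction_linear with
  | zero => simp [tensorF]
  | add p q hp hq =>
      rw [Finsupp.mapDomain_add, tensorF_add_right, tensorF_add_right, hp, hq,
        Finsupp.mapDomain_add]
  | single w c =>
      rw [Finsupp.mapDomain_single]
      unfold tensorF
      rw [show Finsupp.mapDomain (α := List A × List A) (Prod.map id g) =
          ⇑(Finsupp.mapDomain.addMonoidHom (M := ℝ) (Prod.map id g)) from rfl,
        map_finsuppSum]
      refine Finsupp.sum_congr fun w₁ _ => ?_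
      rw [Finsupp.sum_single_index (by simp), Finsupp.sum_single_index (by simp),
        Finsupp.mapDomain.addMonoidHom_apply, Finsupp.mapDomain_single]
      rfl

lemma tensorF_single_one_left {A : Type*} (p : List A) (x : List A →₀ ℝ) :
    tensorF (Finsupp.single p 1) x = Finsupp.mapDomain (fun w => (p, w)) x := by
  unfold tensorF
  rw [Finsupp.sum_single_index (by simp), Finsupp.mapDomain]
  simp

/-- The deconcatenation coproduct `Δ` on a word: the sum of all splittings of the
word into two (possibly empty) factors.  The tensor square `R⟨A⟩ ⊗ R⟨A⟩` is
modeled by `(List A × List A) →₀ ℝ`, a pair of words standing for an elementary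
tensor of words. -/
noncomputable def deconcat {A : Type*} (w : List A) : (List A × List A) →₀ ℝ :=
  ∑ m ∈ Finset.range (w.length + 1), Finsupp.single (w.take m, w.drop m) 1

/-- Linear extension of `Δ` to `R⟨A⟩`. -/
noncomputable def deconcatExt {A : Type*} (p : List A →₀ ℝ) : (List A × List A) →₀ ℝ :=
  p.sum fun w c => c • deconcat w

/-- The componentwise shuffle product on the tensor square:
`(a⊗b) ⧢ (c⊗d) = (a ⧢ c) ⊗ (b ⧢ d)`, extended bilinearly. -/
noncomputable def shuffleTensor {A : Type*} (x y : (List A × List A) →₀ ℝ) :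
    (List A × List A) →₀ ℝ :=
  x.sum fun u c => y.sum fun v d =>
    (c * d) • ((shuffle u.1 v.1).sum fun w₁ e =>
      (shuffle u.2 v.2).sum fun w₂ f => Finsupp.single (w₁, w₂) (e * f))

lemma shuffleTensor_eq {A : Type*} (x y : (List A × List A) →₀ ℝ) :
    shuffleTensor x y =
      x.sum fun u c => y.sum fun v d =>
        (c * d) • tensorF (shuffle u.1 v.1) (shuffle u.2 v.2) := rfl

lemma shuffleTensor_zero_left {A : Type*} (y : (List A × List A) →₀ ℝ) :
    shuffleTensor 0 y = 0 := by simp [shuffleTensor_eq]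

lemma shuffleTensor_zero_right {A : Type*} (x : (List A × List A) →₀ ℝ) :
    shuffleTensor x 0 = 0 := by simp [shuffleTensor_eq]

lemma shuffleTensor_add_left {A : Type*} (x x' y : (List A × List A) →₀ ℝ) :
    shuffleTensor (x + x') y = shuffleTensor x y + shuffleTensor x' y := by
  rw [shuffleTensor_eq, shuffleTensor_eq, shuffleTensor_eq, Finsupp.sum_add_index'] <;>
    intros <;> simp [add_mul, add_smul, Finsupp.sum_add]

lemma shuffleTensor_add_right {A : Type*} (x y y' : (List A × List A) →₀ ℝ) :
    shuffleTensor x (y + y') = shuffleTensor x y + shuffleTensor x y' := by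
  rw [shuffleTensor_eq, shuffleTensor_eq, shuffleTensor_eq, ← Finsupp.sum_add]
  refine Finsupp.sum_congr fun u _ => ?_
  rw [Finsupp.sum_add_index'] <;> intros <;> simp [mul_add, add_smul]

lemma shuffleTensor_single_single {A : Type*} (p q : List A × List A) (c d : ℝ) :
    shuffleTensor (Finsupp.single p c) (Finsupp.single q d) =
      (c * d) • tensorF (shuffle p.1 q.1) (shuffle p.2 q.2) := by
  rw [shuffleTensor_eq, Finsupp.sum_single_index, Finsupp.sum_single_index] <;> simp

lemma shuffleTensor_unit_left {A : Type*} (x : (List A × List A) →₀ ℝ) :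
    shuffleTensor (Finsupp.single (([] : List A), ([] : List A)) 1) x = x := by
  rw [shuffleTensor_eq, Finsupp.sum_single_index (by simp)]
  have : ∀ (v : List A × List A) (d : ℝ),
      (1 * d) • tensorF (shuffle ([] : List A) v.1) (shuffle ([] : List A) v.2) =
        Finsupp.single v d := by
    intro v d
    rw [shuffle_nil_left, shuffle_nil_left, tensorF_single_single]
    simp
  rw [Finsupp.sum_congr fun v _ => this v (x v), Finsupp.sum_single]

lemma shuffleTensor_unit_right {A : Type*} (x : (List A × List A) →₀ ℝ) :
    shuffleTensor x (Finsupp.single (([] : List A), ([] : List A)) 1) = x := by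
  rw [shuffleTensor_eq]
  have : ∀ (v : List A × List A) (d : ℝ),
      (Finsupp.single (([] : List A), ([] : List A)) 1).sum (fun q e =>
        (d * e) • tensorF (shuffle v.1 q.1) (shuffle v.2 q.2)) = Finsupp.single v d := by
    intro v d
    rw [Finsupp.sum_single_index (by simp), shuffle_nil_right, shuffle_nil_right,
      tensorF_single_single]
    simp
  rw [Finsupp.sum_congr fun v _ => this v (x v), Finsupp.sum_single]

lemma shuffleTensor_left_unit_mapDomain {A : Type*} (u : List A) (c : ℝ) (b : A)
    (y : (List A × List A) →₀ ℝ) :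
    shuffleTensor (Finsupp.single (([] : List A), u) c)
        (Finsupp.mapDomain (Prod.map (b :: ·) id) y) =
      Finsupp.mapDomain (Prod.map (b :: ·) id)
        (shuffleTensor (Finsupp.single (([] : List A), u) c) y) := by
  induction y using Finsupp.induction_linear with
  | zero => simp [shuffleTensor_zero_right]
  | add p q hp hq =>
      rw [Finsupp.mapDomain_add, shuffleTensor_add_right, hp, hq, shuffleTensor_add_right,
        Finsupp.mapDomain_add]
  | single q d =>
      rw [Finsupp.mapDomain_single, shuffleTensor_single_single,
        shuffleTensor_single_single, Finsupp.mapDomain_smul]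
      have h1 : (Prod.map (b :: ·) id q).1 = b :: q.1 := rfl
      have h2 : (Prod.map (b :: ·) id q).2 = q.2 := rfl
      rw [h1, h2, shuffle_nil_left, shuffle_nil_left,
        ← Finsupp.mapDomain_single (f := (b :: ·)) (a := q.1) (b := (1 : ℝ)),
        tensorF_mapDomain_left]

lemma shuffleTensor_mapDomain_right_unit {A : Type*} (v : List A) (d : ℝ) (a : A)
    (x : (List A × List A) →₀ ℝ) :
    shuffleTensor (Finsupp.mapDomain (Prod.map (a :: ·) id) x)
        (Finsupp.single (([] : List A), v) d) =
      Finsupp.mapDomain (Prod.map (a :: ·) id)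
        (shuffleTensor x (Finsupp.single (([] : List A), v) d)) := by
  induction x using Finsupp.induction_linear with
  | zero => simp [shuffleTensor_zero_left]
  | add p q hp hq =>
      rw [Finsupp.mapDomain_add, shuffleTensor_add_left, hp, hq, shuffleTensor_add_left,
        Finsupp.mapDomain_add]
  | single q c =>
      rw [Finsupp.mapDomain_single, shuffleTensor_single_single,
        shuffleTensor_single_single, Finsupp.mapDomain_smul]
      have h1 : (Prod.map (a :: ·) id q).1 = a :: q.1 := rfl
      have h2 : (Prod.map (a :: ·) id q).2 = q.2 := rfl
      rw [h1, h2, shuffle_nil_right, shuffle_nil_right,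
        ← Finsupp.mapDomain_single (f := (a :: ·)) (a := q.1) (b := (1 : ℝ)),
        tensorF_mapDomain_left]

lemma shuffleTensor_mapDomain_mapDomain {A : Type*} (a b : A)
    (x y : (List A × List A) →₀ ℝ) :
    shuffleTensor (Finsupp.mapDomain (Prod.map (a :: ·) id) x)
        (Finsupp.mapDomain (Prod.map (b :: ·) id) y) =
      Finsupp.mapDomain (Prod.map (a :: ·) id)
          (shuffleTensor x (Finsupp.mapDomain (Prod.map (b :: ·) id) y)) +
      Finsupp.mapDomain (Prod.map (b :: ·) id)
          (shuffleTensor (Finsupp.mapDomain (Prod.map (a :: ·) id) x) y) := by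
  induction x using Finsupp.induction_linear with
  | zero => simp [shuffleTensor_zero_left]
  | add p q hp hq =>
      rw [Finsupp.mapDomain_add, shuffleTensor_add_left, hp, hq, shuffleTensor_add_left,
        shuffleTensor_add_left, Finsupp.mapDomain_add, Finsupp.mapDomain_add]
      abel
  | single p c =>
      induction y using Finsupp.induction_linear with
      | zero => simp [shuffleTensor_zero_right]
      | add r s hr hs =>
          rw [Finsupp.mapDomain_add, shuffleTensor_add_right, hr, hs, shuffleTensor_add_right,
            shuffleTensor_add_right, Finsupp.mapDomain_add, Finsupp.mapDomain_add]
          abel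
      | single q d =>
          rw [Finsupp.mapDomain_single, Finsupp.mapDomain_single,
            shuffleTensor_single_single, shuffleTensor_single_single,
            shuffleTensor_single_single, Finsupp.mapDomain_smul, Finsupp.mapDomain_smul]
          have h1 : (Prod.map (a :: ·) id p).1 = a :: p.1 := rfl
          have h2 : (Prod.map (a :: ·) id p).2 = p.2 := rfl
          have h3 : (Prod.map (b :: ·) id q).1 = b :: q.1 := rfl
          have h4 : (Prod.map (b :: ·) id q).2 = q.2 := rfl
          rw [h1, h2, h3, h4, shuffle_cons_cons, tensorF_add_left, smul_add,
            tensorF_mapDomain_left, tensorF_mapDomain_left]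

lemma deconcat_nil {A : Type*} :
    deconcat ([] : List A) = Finsupp.single (([] : List A), ([] : List A)) 1 := by
  simp [deconcat]

lemma deconcat_cons {A : Type*} (a : A) (w : List A) :
    deconcat (a :: w) = Finsupp.single (([] : List A), a :: w) 1 +
      Finsupp.mapDomain (Prod.map (a :: ·) id) (deconcat w) := by
  unfold deconcat
  rw [show (a :: w).length + 1 = w.length + 1 + 1 from by simp, Finset.sum_range_succ',
    show Finsupp.mapDomain (α := List A × List A) (Prod.map (a :: ·) id) =
      ⇑(Finsupp.mapDomain.addMonoidHom (M := ℝ) (Prod.map (a :: ·) id)) from rfl,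
    map_sum, add_comm]
  congr 1
  refine Finset.sum_congr rfl fun m _ => ?_
  rw [Finsupp.mapDomain.addMonoidHom_apply, Finsupp.mapDomain_single]
  rfl

lemma deconcatExt_zero {A : Type*} : deconcatExt (0 : List A →₀ ℝ) = 0 := by
  simp [deconcatExt]

lemma deconcatExt_add {A : Type*} (p q : List A →₀ ℝ) :
    deconcatExt (p + q) = deconcatExt p + deconcatExt q := by
  unfold deconcatExt
  rw [Finsupp.sum_add_index'] <;> intros <;> simp [add_smul]

lemma deconcatExt_single {A : Type*} (w : List A) (c : ℝ) :
    deconcatExt (Finsupp.single w c) = c • deconcat w := by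
  unfold deconcatExt
  rw [Finsupp.sum_single_index (by simp)]

lemma deconcatExt_mapDomain_cons {A : Type*} (a : A) (S : List A →₀ ℝ) :
    deconcatExt (Finsupp.mapDomain (a :: ·) S) =
      Finsupp.mapDomain (fun w => (([] : List A), a :: w)) S +
      Finsupp.mapDomain (Prod.map (a :: ·) id) (deconcatExt S) := by
  induction S using Finsupp.induction_linear with
  | zero => simp [deconcatExt_zero]
  | add p q hp hq =>
      rw [Finsupp.mapDomain_add, deconcatExt_add, hp, hq, deconcatExt_add,
        Finsupp.mapDomain_add, Finsupp.mapDomain_add]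
      abel
  | single w c =>
      rw [Finsupp.mapDomain_single, deconcatExt_single, deconcat_cons, smul_add,
        deconcatExt_single, Finsupp.mapDomain_single, Finsupp.mapDomain_smul,
        Finsupp.smul_single, smul_eq_mul, mul_one]

/-- deconcatenation is a morphism for the shuffle product:
`Δ(u ⧢ v) = Δ(u) ⧢ Δ(v)`. -/
theorem deconcat_shuffle_morphism {A : Type*} (u v : List A) :
    deconcatExt (shuffle u v) = shuffleTensor (deconcat u) (deconcat v) := by
  suffices h : ∀ n (u v : List A), u.length + v.length = n →
      deconcatExt (shuffle u v) = shuffleTensor (deconcat u) (deconcat v) from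
    h _ u v rfl
  intro n
  induction n using Nat.strong_induction_on with
  | _ n ih =>
  intro u v hn
  match u, v with
  | [], v =>
      rw [shuffle_nil_left, deconcatExt_single, one_smul, deconcat_nil,
        shuffleTensor_unit_left]
  | a :: u', [] =>
      rw [shuffle_nil_right, deconcatExt_single, one_smul, deconcat_nil,
        shuffleTensor_unit_right]
  | a :: u', b :: v' =>
      have ih1 : deconcatExt (shuffle u' (b :: v')) =
          shuffleTensor (deconcat u') (deconcat (b :: v')) := by
        refine ih (u'.length + (b :: v').length) (by simp at hn ⊢; omega) u' (b :: v') rfl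
      have ih2 : deconcatExt (shuffle (a :: u') v') =
          shuffleTensor (deconcat (a :: u')) (deconcat v') := by
        refine ih ((a :: u').length + v'.length) (by simp at hn ⊢; omega) (a :: u') v' rfl
      have hterm1 : shuffleTensor (Finsupp.single ((([] : List A), a :: u')) 1)
          (Finsupp.single ((([] : List A), b :: v')) 1) =
          Finsupp.mapDomain (fun w => (([] : List A), a :: w)) (shuffle u' (b :: v')) +
          Finsupp.mapDomain (fun w => (([] : List A), b :: w)) (shuffle (a :: u') v') := by
        rw [shuffleTensor_single_single]
        simp only [one_mul, one_smul]
        rw [shuffle_nil_left, tensorF_single_one_left, shuffle_cons_cons,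
          Finsupp.mapDomain_add, ← Finsupp.mapDomain_comp, ← Finsupp.mapDomain_comp]
        rfl
      have e1 : shuffleTensor (deconcat u') (deconcat (b :: v')) =
          shuffleTensor (deconcat u') (Finsupp.single ((([] : List A), b :: v')) 1) +
          shuffleTensor (deconcat u')
            (Finsupp.mapDomain (Prod.map (b :: ·) id) (deconcat v')) := by
        rw [deconcat_cons, shuffleTensor_add_right]
      have e2 : shuffleTensor (deconcat (a :: u')) (deconcat v') =
          shuffleTensor (Finsupp.single ((([] : List A), a :: u')) 1) (deconcat v') +
          shuffleTensor (Finsupp.mapDomain (Prod.map (a :: ·) id) (deconcat u'))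
            (deconcat v') := by
        rw [deconcat_cons, shuffleTensor_add_left]
      rw [shuffle_cons_cons, deconcatExt_add, deconcatExt_mapDomain_cons,
        deconcatExt_mapDomain_cons, ih1, ih2, e1, e2, Finsupp.mapDomain_add,
        Finsupp.mapDomain_add]
      conv_rhs => rw [deconcat_cons a u', deconcat_cons b v', shuffleTensor_add_left,
        shuffleTensor_add_right, shuffleTensor_add_right, hterm1,
        shuffleTensor_left_unit_mapDomain, shuffleTensor_mapDomain_right_unit,
        shuffleTensor_mapDomain_mapDomain]
      abel
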